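/- arXiv:2605.00660 — 2 statements merged into one kernel-verified Lean document; each statement's English description precedes it below -/
import Mathlib

section
/- For any m ≥ 2, threshold τ ∈ ZZ/m, and integer 2 ≤ a ≤ 6, the map M_τ^a : (ZZ/m)^6 → (ZZ/m)^6 defined by M_τ^a(z) = z − p_a if ρ_τ(z) < a and z − p_{a−1} if ρ_τ(z) ≥ a, is a bijection. -/
/-- `p_r ∈ (ℤ/m)^6` has its first `r` coordinates equal to `1` and the rest `0`. -/
def pvec (m : ℕ) (r : ℕ) : Fin 6 → ZMod m := fun j => if (j : ℕ) < r then 1 else 0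

/-- `ρ_τ(z)`: the least index `i ∈ {1,…,6}` with `z_i = τ`, or `6` if none exists.
(`Fin 6` index `i₀` corresponds to the coordinate `i₀ + 1`.) -/
def rho {m : ℕ} (τ : ZMod m) (z : Fin 6 → ZMod m) : ℕ :=
  if h : (Finset.univ.filter fun i : Fin 6 => z i = τ).Nonempty
  then ((Finset.univ.filter fun i : Fin 6 => z i = τ).min' h : Fin 6).val + 1
  else 6

/-- `M_τ^Δ(z) = z − p_{ρ_τ(z)}`. -/
def Mdelta {m : ℕ} (τ : ZMod m) (z : Fin 6 → ZMod m) : Fin 6 → ZMod m :=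
  z - pvec m (rho τ z)

/-- `M_τ^a(z) = z − p_a` if `ρ_τ(z) < a`, and `z − p_{a−1}` if `ρ_τ(z) ≥ a`. -/
def Mnum {m : ℕ} (τ : ZMod m) (a : ℕ) (z : Fin 6 → ZMod m) : Fin 6 → ZMod m :=
  if rho τ z < a then z - pvec m a else z - pvec m (a - 1)

/-! The vectors `p_a` and `p_{a-1}` agree in the coordinates `1, …, a-1`, and these are the only
coordinates the test `ρ_τ(z) < a` reads (for `a > 6` the test always succeeds). Hence the test
gives the same answer on `w + p_a` and on `w + p_{a-1}`, so `w ↦ w + p_a` or `w ↦ w + p_{a-1}`,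
chosen by that common answer, inverts `M_τ^a`. -/

theorem bijective_ite_sub {G : Type*} [AddGroup G] (P : G → Prop) [DecidablePred P] (u v : G)
    (hP : ∀ w, P (w + u) ↔ P (w + v)) :
    Function.Bijective fun z => if P z then z - u else z - v := by
  refine Function.bijective_iff_has_inverse.2
    ⟨fun w => if P (w + u) then w + u else w + v, fun z => ?_, fun w => ?_⟩
  · by_cases hz : P z
    · simp [hz]
    · have : ¬P (z - v + u) := by rwa [hP, sub_add_cancel]
      simp [hz, this]
  · by_cases hw : P (w + u)
    · simp [hw]
    · have : ¬P (w + v) := by rwa [← hP]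
      simp [hw, this]

section rho

variable {m : ℕ} (τ : ZMod m) (z : Fin 6 → ZMod m)

theorem rho_le_six : rho τ z ≤ 6 := by
  unfold rho
  split
  · exact Fin.is_lt _
  · exact le_rfl

theorem rho_lt_iff {a : ℕ} (ha : a ≤ 6) :
    rho τ z < a ↔ ∃ i : Fin 6, (i : ℕ) + 1 < a ∧ z i = τ := by
  unfold rho
  split
  case isTrue hne =>
    constructor
    · intro hlt
      exact ⟨_, hlt, (Finset.mem_filter.1 (Finset.min'_mem _ hne)).2⟩
    · rintro ⟨i, hi, hzi⟩
      have := Finset.min'_le (Finset.univ.filter fun j : Fin 6 => z j = τ) i (by simpa using hzi)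
      exact lt_of_le_of_lt (Nat.succ_le_succ this) hi
  case isFalse hempty =>
    refine ⟨fun hlt => absurd hlt (by omega), fun ⟨i, _, hzi⟩ => ?_⟩
    exact absurd ⟨i, by simpa using hzi⟩ hempty

theorem rho_lt_congr {a : ℕ} {z' : Fin 6 → ZMod m}
    (h : ∀ i : Fin 6, (i : ℕ) + 1 < a → z i = z' i) : rho τ z < a ↔ rho τ z' < a := by
  by_cases ha : a ≤ 6
  · rw [rho_lt_iff τ z ha, rho_lt_iff τ z' ha]
    exact exists_congr fun i => and_congr_right fun hi => by rw [h i hi]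
  · have := rho_le_six τ z
    have := rho_le_six τ z'
    omega

end rho

theorem stmt6_general (m : ℕ) (τ : ZMod m) (a : ℕ) :
    Function.Bijective (Mnum τ a) := by
  refine bijective_ite_sub (fun z => rho τ z < a) _ _ fun w => rho_lt_congr τ _ fun i hi => ?_
  simp only [Pi.add_apply, pvec, if_pos (by omega : (i : ℕ) < a),
    if_pos (by omega : (i : ℕ) < a - 1)]

theorem stmt6 (m : ℕ) (hm : 2 ≤ m) (τ : ZMod m) (a : ℕ) (ha2 : 2 ≤ a) (ha6 : a ≤ 6) :
    Function.Bijective (Mnum τ a) :=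
  stmt6_general m τ a
end

section
/- Let W = (ξ_0, …, ξ_{m−1}) be a word of length m in the symbol set {0, Δ, 2, 3, 4, 5, 6}, let τ_0, …, τ_{m−1} ∈ ZZ/m be arbitrary thresholds, and let R_W = M_{τ_{m−1}}^{ξ_{m−1}} ∘ ⋯ ∘ M_{τ_0}^{ξ_0} be the composite of the corresponding prefix maps on (ZZ/m)^6. Let N_0, N_Δ, N_2, …, N_6 be the number of occurrences of each symbol in W. If gcd(N_0, m) = 1 and gcd(N_k − N_Δ, m) = 1 for every k ∈ {2,3,4,5,6}, then R_W is a single cycle of length m^6 on (ZZ/m)^6. -/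
/-- The symbol set `{0, Δ, 2, 3, 4, 5, 6}` encoded as `Fin 7`,
with `0 ↦ 0`, `1 ↦ Δ`, and `a ↦ a` for `2 ≤ a ≤ 6`. -/
def Mstep {m : ℕ} (τ : ZMod m) (ξ : Fin 7) (z : Fin 6 → ZMod m) : Fin 6 → ZMod m :=
  if (ξ : ℕ) = 0 then z
  else if (ξ : ℕ) = 1 then Mdelta τ z
  else Mnum τ (ξ : ℕ) z

/-- The return map `R_W = M_{τ_{m−1}}^{ξ_{m−1}} ∘ ⋯ ∘ M_{τ_0}^{ξ_0}`. -/
def returnWord (m : ℕ) (W : ℕ → Fin 7) (τ : ℕ → ZMod m)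
    (z : Fin 6 → ZMod m) : Fin 6 → ZMod m :=
  (List.range m).foldl (fun z t => Mstep (τ t) (W t) z) z

/-- The number of occurrences of symbol `ξ` in the length-`m` word `W`. -/
def symCount (m : ℕ) (W : ℕ → Fin 7) (ξ : Fin 7) : ℕ :=
  ((Finset.range m).filter fun t => W t = ξ).card

/-!
Each letter map subtracts from coordinate `j` a quantity depending only on the coordinates
before `j`, and hence so does the composite `R_W`. On the first `j + 1` coordinates `R_W` is
therefore a skew product `(x, y) ↦ (R x, y - c x)` over its action `R` on the first `j`
coordinates. If `R` is a single cycle, going once around it shifts the fibre coordinate by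
`∑ₓ c x`; when this is a unit mod `m`, the skew product is a single cycle too. The sum
`∑ₓ c x` is additive over the letters of `W`, and counting the points of `(ℤ/m)^j` with no
coordinate equal to `τ` (there are `(m - 1)^j ≡ (-1)^j`) gives `-N_0` for `j = 0` and
`(-1)^(j+1) (N_{j+1} - N_Δ)` for `j ≥ 1`.
-/

section SkewProduct

variable {α G : Type*} [AddCommGroup G]

def skewProduct (R : α → α) (c : α → G) (p : α × G) : α × G :=
  (R p.1, p.2 - c p.1)

theorem skewProduct_iterate (R : α → α) (c : α → G) (k : ℕ) (x : α) (y : G) :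
    (skewProduct R c)^[k] (x, y) = (R^[k] x, y - ∑ i ∈ Finset.range k, c (R^[i] x)) := by
  induction k with
  | zero => simp
  | succ k ih =>
    rw [Function.iterate_succ_apply', ih, Function.iterate_succ_apply', skewProduct,
      Finset.sum_range_succ, sub_sub]

theorem sum_range_minimalPeriod_eq_sum [Fintype α] {R : α → α}
    (hR : ∀ x x', ∃ k, R^[k] x = x') {M : Type*} [AddCommMonoid M] (f : α → M) (x : α) :
    ∑ i ∈ Finset.range (Function.minimalPeriod R x), f (R^[i] x) = ∑ a, f a := by
  have hsurj : Function.Surjective R := fun x' => by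
    obtain ⟨k, hk⟩ := hR (R x') x'
    refine ⟨R^[k] x', ?_⟩
    rwa [← Function.iterate_succ_apply' R k x', Function.iterate_succ_apply]
  have hpos : 0 < Function.minimalPeriod R x :=
    Function.minimalPeriod_pos_of_mem_periodicPts
      ((Finite.injective_iff_surjective.mpr hsurj).mem_periodicPts x)
  refine Finset.sum_nbij (R^[·] x) (fun _ _ => Finset.mem_univ _) ?_ ?_ (fun _ _ => rfl)
  · simpa [Set.InjOn] using Function.iterate_injOn_Iio_minimalPeriod (f := R) (x := x)
  · intro a _
    obtain ⟨k, hk⟩ := hR x a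
    exact ⟨k % _, by simpa using Nat.mod_lt k hpos, by
      simpa [Function.iterate_mod_minimalPeriod_eq] using hk⟩

theorem skewProduct_transitive {m : ℕ} [NeZero m] [Fintype α] {R : α → α}
    (hR : ∀ x x', ∃ k, R^[k] x = x') {c : α → ZMod m} (hc : IsUnit (∑ a, c a)) :
    ∀ p p', ∃ k, (skewProduct R c)^[k] p = p' := by
  rintro ⟨x, y⟩ ⟨x', y'⟩
  obtain ⟨k₀, hk₀⟩ := hR x x'
  set y₁ := y - ∑ i ∈ Finset.range k₀, c (R^[i] x)
  set P := Function.minimalPeriod R x'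
  have hreturn :
      ∀ j : ℕ, (skewProduct R c)^[P * j] (x', y₁) = (x', y₁ - j * ∑ a, c a) := by
    intro j
    rw [Function.iterate_mul]
    induction j with
    | zero => simp
    | succ j ih =>
      rw [Function.iterate_succ_apply', ih, skewProduct_iterate, Function.iterate_minimalPeriod,
        sum_range_minimalPeriod_eq_sum hR]
      congr 1
      push_cast
      ring
  obtain ⟨u, hu⟩ := hc
  refine ⟨P * ((y₁ - y') * ↑u⁻¹).val + k₀, ?_⟩
  rw [Function.iterate_add_apply, skewProduct_iterate R c k₀, hk₀, hreturn,
    ZMod.natCast_zmod_val, ← hu, Units.inv_mul_cancel_right, sub_sub_cancel]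

end SkewProduct

section PrefixMaps

variable {G : Type*} [AddCommGroup G]

def prefixStep (δ : ∀ j, (Fin j → G) → G) {n : ℕ} (z : Fin n → G) : Fin n → G :=
  fun j => z j - δ j (Fin.take j j.isLt.le z)

def prefixWord (L : List (∀ j, (Fin j → G) → G)) {n : ℕ} (z : Fin n → G) : Fin n → G :=
  L.foldl (fun z δ => prefixStep δ z) z

def prefixCocycle {n : ℕ} : List (∀ j, (Fin j → G) → G) → (Fin n → G) → G
  | [], _ => 0
  | δ :: L, x => δ n x + prefixCocycle L (prefixStep δ x)

theorem prefixStep_snoc (δ : ∀ j, (Fin j → G) → G) {n : ℕ} (x : Fin n → G) (y : G) :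
    prefixStep δ (Fin.snoc x y : Fin (n + 1) → G) = Fin.snoc (prefixStep δ x) (y - δ n x) := by
  funext j
  refine Fin.lastCases ?_ (fun i => ?_) j
  · simp only [prefixStep, Fin.snoc_last, Fin.val_last]
    rw [← Fin.take_init n le_rfl, Fin.init_snoc, Fin.take_eq_self]
  · simp only [prefixStep, Fin.snoc_castSucc, Fin.val_castSucc]
    rw [← Fin.take_init i i.isLt.le, Fin.init_snoc]

theorem prefixWord_snoc (L : List (∀ j, (Fin j → G) → G)) {n : ℕ} (x : Fin n → G)
    (y : G) :
    prefixWord L (Fin.snoc x y : Fin (n + 1) → G) =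
      Fin.snoc (prefixWord L x) (y - prefixCocycle L x) := by
  induction L generalizing x y with
  | nil => simp [prefixWord, prefixCocycle]
  | cons δ L ih =>
    simp only [prefixWord, List.foldl_cons] at ih ⊢
    rw [prefixStep_snoc, ih, prefixCocycle, sub_sub]

theorem prefixStep_injective (δ : ∀ j, (Fin j → G) → G) :
    ∀ n, Function.Injective (prefixStep δ (n := n))
  | 0 => fun _ _ _ => Subsingleton.elim _ _
  | n + 1 => by
    intro z z' h
    rw [← Fin.snoc_init_self z, ← Fin.snoc_init_self z', prefixStep_snoc, prefixStep_snoc] at h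
    obtain ⟨hinit, hlast⟩ := Fin.snoc_injective2 h
    have hz : Fin.init z = Fin.init z' := prefixStep_injective δ n hinit
    rw [hz, sub_left_inj] at hlast
    rw [← Fin.snoc_init_self z, ← Fin.snoc_init_self z', hz, hlast]

def levelSum [Fintype G] (L : List (∀ j, (Fin j → G) → G)) (j : ℕ) : G :=
  (L.map fun δ => ∑ x : Fin j → G, δ j x).sum

theorem sum_prefixCocycle [Fintype G] (L : List (∀ j, (Fin j → G) → G)) (n : ℕ) :
    ∑ x : Fin n → G, prefixCocycle L x = levelSum L n := by
  unfold levelSum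
  induction L with
  | nil => simp [prefixCocycle]
  | cons δ L ih =>
    simp only [prefixCocycle, Finset.sum_add_distrib, List.map_cons, List.sum_cons, ← ih]
    congr 1
    exact (Finite.injective_iff_bijective.mp (prefixStep_injective δ n)).sum_comp _

end PrefixMaps

theorem prefixWord_transitive {m : ℕ} [NeZero m]
    (L : List (∀ j, (Fin j → ZMod m) → ZMod m)) :
    ∀ n, (∀ j < n, IsUnit (levelSum L j)) →
      ∀ z z' : Fin n → ZMod m, ∃ k, (prefixWord L)^[k] z = z'
  | 0, _ => fun _ _ => ⟨0, Subsingleton.elim _ _⟩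
  | n + 1, hunit => by
    let snoc₂ (p : (Fin n → ZMod m) × ZMod m) : Fin (n + 1) → ZMod m := Fin.snoc p.1 p.2
    have hsemi : Function.Semiconj snoc₂ (skewProduct (prefixWord L) (prefixCocycle L))
        (prefixWord L) :=
      fun p => (prefixWord_snoc L p.1 p.2).symm
    have hbase := prefixWord_transitive L n fun j hj => hunit j (Nat.lt_succ_of_lt hj)
    have hfiber : IsUnit (∑ x : Fin n → ZMod m, prefixCocycle L x) := by
      rw [sum_prefixCocycle]
      exact hunit n n.lt_succ_self
    intro z z'
    obtain ⟨k, hk⟩ := skewProduct_transitive hbase hfiber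
      (Fin.init z, z (Fin.last n)) (Fin.init z', z' (Fin.last n))
    refine ⟨k, ?_⟩
    rw [← Fin.snoc_init_self z, ← Fin.snoc_init_self z']
    exact (hsemi.iterate_right k _).symm.trans (congrArg snoc₂ hk)

section Symbols

variable {m : ℕ}

/-- What `M_τ^ξ` subtracts from the coordinate of 0-based index `j`, as a function of the
coordinates `x` before it. -/
def prefixDec (τ : ZMod m) (ξ : Fin 7) (j : ℕ) (x : Fin j → ZMod m) : ZMod m :=
  if ξ = 0 then 0
  else if ξ = 1 then (if ∀ i, x i ≠ τ then 1 else 0)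
  else if j + 1 < ξ then 1
  else if j + 1 = ξ then (if ∀ i, x i ≠ τ then 0 else 1)
  else 0

theorem lt_rho_iff (τ : ZMod m) (z : Fin 6 → ZMod m) (j : Fin 6) :
    (j : ℕ) < rho τ z ↔ ∀ i, Fin.take j j.isLt.le z i ≠ τ := by
  simp only [Fin.take_apply]
  unfold rho
  split_ifs with h
  · set i₀ := (Finset.univ.filter fun i : Fin 6 => z i = τ).min' h
    have hmin : z i₀ = τ := (Finset.mem_filter.mp (Finset.min'_mem _ h)).2
    constructor
    · intro hj i hi
      have := Finset.min'_le (Finset.univ.filter fun i : Fin 6 => z i = τ) (Fin.castLE _ i)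
        (by simpa using hi)
      rw [Fin.le_def, Fin.val_castLE] at this
      omega
    · intro hall
      by_contra hlt
      exact hall ⟨i₀, by omega⟩ hmin
  · simp only [Finset.filter_nonempty_iff, not_exists, not_and] at h
    exact ⟨fun _ i => h _ (Finset.mem_univ _), fun _ => j.isLt⟩

theorem Mstep_eq_prefixStep (τ : ZMod m) (ξ : Fin 7) :
    Mstep τ ξ = prefixStep (prefixDec τ ξ) := by
  funext z j
  have hξ := ξ.isLt
  simp only [Mstep, Mdelta, Mnum, prefixStep, prefixDec, Fin.ext_iff, Fin.val_zero, Fin.val_one]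
  -- the branches see `ρ_τ(z)` only through the comparison `j < ρ_τ(z)`
  by_cases hall : ∀ i, Fin.take j j.isLt.le z i ≠ τ
  · have hρ := (lt_rho_iff τ z j).mpr hall
    split_ifs <;> simp only [pvec, Pi.sub_apply, sub_zero] <;> split_ifs <;>
      first | rfl | exact sub_zero _ | omega
  · have hρ := mt (lt_rho_iff τ z j).mp hall
    split_ifs <;> simp only [pvec, Pi.sub_apply, sub_zero] <;> split_ifs <;>
      first | rfl | exact sub_zero _ | omega

end Symbols

section LevelSums

variable {m : ℕ} [NeZero m]

theorem sum_ite_forall_ne (τ : ZMod m) (j : ℕ) :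
    ∑ x : Fin j → ZMod m, (if ∀ i, x i ≠ τ then 1 else 0 : ZMod m) = (-1) ^ j := by
  have hcoord : ∑ a : ZMod m, (if a ≠ τ then 1 else 0 : ZMod m) = -1 := by
    simp [Finset.sum_ite, Finset.filter_ne', ZMod.card, Nat.cast_sub NeZero.one_le]
  simp_rw [← hcoord, Fintype.sum_pow, Finset.prod_boole, Finset.mem_univ, true_implies]

theorem sum_prefixDec_zero (τ : ZMod m) (ξ : Fin 7) :
    ∑ x : Fin 0 → ZMod m, prefixDec τ ξ 0 x = 1 - if ξ = 0 then 1 else 0 := by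
  rw [Fintype.sum_unique]
  fin_cases ξ <;> simp [prefixDec]

theorem sum_prefixDec_of_pos (τ : ZMod m) (ξ : Fin 7) {j : ℕ} (hj : 0 < j) {k : Fin 7}
    (hk : (k : ℕ) = j + 1) :
    ∑ x : Fin j → ZMod m, prefixDec τ ξ j x =
      (-1) ^ (j + 1) * ((if ξ = k then 1 else 0) - if ξ = 1 then 1 else 0) := by
  have hξk : ξ = k ↔ (ξ : ℕ) = j + 1 := by rw [Fin.ext_iff, hk]
  have hcard : ∑ _x : Fin j → ZMod m, (1 : ZMod m) = 0 := by simp [ZMod.card, hj.ne']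
  simp only [prefixDec, hξk, Fin.ext_iff, Fin.val_zero, Fin.val_one]
  by_cases h0 : (ξ : ℕ) = 0
  · simp [h0]
  by_cases h1 : (ξ : ℕ) = 1
  · have h1k : (1 : ℕ) ≠ j + 1 := by omega
    simp only [h1, h1k, one_ne_zero, if_true, if_false]
    rw [sum_ite_forall_ne]
    ring
  by_cases hlt : j + 1 < ξ
  · simp [h0, h1, hlt, hlt.ne', hcard]
  by_cases heq : j + 1 = ξ
  · have hcompl : ∀ x : Fin j → ZMod m,
        (if ∀ i, x i ≠ τ then 0 else 1 : ZMod m) = 1 - if ∀ i, x i ≠ τ then 1 else 0 := by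
      intro x; split_ifs <;> simp
    simp only [h0, h1, heq, lt_self_iff_false, if_true, if_false, hcompl, Finset.sum_sub_distrib,
      sum_ite_forall_ne, hcard]
    rw [← heq]
    ring
  · simp [h0, h1, hlt, heq, Ne.symm heq]

def symbolWord (W : ℕ → Fin 7) (τ : ℕ → ZMod m) :
    List (∀ j, (Fin j → ZMod m) → ZMod m) :=
  (List.range m).map fun t => prefixDec (τ t) (W t)

theorem levelSum_symbolWord (W : ℕ → Fin 7) (τ : ℕ → ZMod m) (j : ℕ) :
    levelSum (symbolWord W τ) j =
      ∑ t ∈ Finset.range m, ∑ x : Fin j → ZMod m, prefixDec (τ t) (W t) j x := by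
  rw [levelSum, symbolWord, List.map_map, Finset.sum_eq_multiset_sum, Finset.range_val,
    Multiset.range, Multiset.map_coe, Multiset.sum_coe]
  rfl

omit [NeZero m] in
theorem sum_range_ite_eq_symCount (W : ℕ → Fin 7) (ξ : Fin 7) :
    ∑ t ∈ Finset.range m, (if W t = ξ then 1 else 0 : ZMod m) = symCount m W ξ := by
  rw [Finset.sum_boole]
  rfl

theorem levelSum_symbolWord_zero (W : ℕ → Fin 7) (τ : ℕ → ZMod m) :
    levelSum (symbolWord W τ) 0 = -symCount m W 0 := by
  rw [levelSum_symbolWord]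
  simp only [sum_prefixDec_zero, Finset.sum_sub_distrib, sum_range_ite_eq_symCount]
  simp

theorem levelSum_symbolWord_of_pos (W : ℕ → Fin 7) (τ : ℕ → ZMod m) {j : ℕ} (hj : 0 < j)
    {k : Fin 7} (hk : (k : ℕ) = j + 1) :
    levelSum (symbolWord W τ) j = (-1) ^ (j + 1) * (symCount m W k - symCount m W 1) := by
  rw [levelSum_symbolWord]
  simp only [sum_prefixDec_of_pos _ _ hj hk, ← Finset.mul_sum, Finset.sum_sub_distrib,
    sum_range_ite_eq_symCount]

end LevelSums

theorem returnWord_eq_prefixWord (m : ℕ) (W : ℕ → Fin 7) (τ : ℕ → ZMod m) :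
    returnWord m W τ = prefixWord (symbolWord W τ) := by
  funext z
  simp only [returnWord, prefixWord, symbolWord, List.foldl_map, Mstep_eq_prefixStep]

theorem ZMod.isUnit_intCast_of_gcd_eq_one {m : ℕ} {d : ℤ} (h : Int.gcd d m = 1) :
    IsUnit (d : ZMod m) := by
  rw [ZMod.coe_int_isUnit_iff_isCoprime, Int.isCoprime_iff_gcd_eq_one, Int.gcd_comm]
  exact h

theorem stmt16_general (m : ℕ) (W : ℕ → Fin 7) (τ : ℕ → ZMod m)
    (hN0 : Nat.gcd (symCount m W 0) m = 1)
    (hNk : ∀ k : Fin 7, 2 ≤ (k : ℕ) →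
      Int.gcd ((symCount m W k : ℤ) - (symCount m W 1 : ℤ)) m = 1) :
    ∀ z z' : Fin 6 → ZMod m, ∃ j : ℕ, (returnWord m W τ)^[j] z = z' := by
  -- for `m = 0` the count is `0`, and `Nat.gcd 0 0 = 0`
  have : NeZero m := ⟨by rintro rfl; simp [symCount] at hN0⟩
  rw [returnWord_eq_prefixWord]
  refine prefixWord_transitive _ 6 fun j hj => ?_
  rcases Nat.eq_zero_or_pos j with rfl | hpos
  · rw [levelSum_symbolWord_zero]
    exact ((ZMod.isUnit_iff_coprime _ m).mpr hN0).neg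
  · rw [levelSum_symbolWord_of_pos W τ hpos (k := ⟨j + 1, by omega⟩) rfl]
    refine (isUnit_one.neg.pow _).mul ?_
    exact_mod_cast ZMod.isUnit_intCast_of_gcd_eq_one (hNk ⟨j + 1, by omega⟩ (by simp; omega))

theorem stmt16 (m : ℕ) (hm : 2 ≤ m) (W : ℕ → Fin 7) (τ : ℕ → ZMod m)
    (hN0 : Nat.gcd (symCount m W 0) m = 1)
    (hNk : ∀ k : Fin 7, 2 ≤ (k : ℕ) →
      Int.gcd ((symCount m W k : ℤ) - (symCount m W 1 : ℤ)) m = 1) :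
    ∀ z z' : Fin 6 → ZMod m, ∃ j : ℕ, (returnWord m W τ)^[j] z = z' :=
  stmt16_general m W τ hN0 hNk
end
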